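/- arXiv:1905.05703 — 2 statements merged into one kernel-verified Lean document; each statement's English description precedes it below -/
import Mathlib

section
/- For every positive constant L there exist constants 0 < c < κ < 1 such that for all L-Lipschitz functions δ : ℝ^n → (0, ∞) and all L-Lipschitz functions ξ : ℝ^(n-1) → ℝ the following inclusions hold: V_{cδ}(Γ_ξ) ⊆ { (x̃, x_n) : |x_n − ξ(x̃)| ≤ κ·σ(x̃) } ⊆ V_{δ}(Γ_ξ), where σ(x̃) := δ(x̃, ξ(x̃)). -/
/-
Write `a = |t - ξ x|` for a point `p = (x, t)` and `σ = δ (x, ξ x)`. The vertical segment from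
`p` to the graph has length `a`, so `dist(p, Γ_ξ) ≤ a`; conversely the graph point `(y, ξ y)`
satisfies `a ≤ |t - ξ y| + L |x - y| ≤ (1 + L) dist(p, (y, ξ y))`, so `a ≤ (1 + L) dist(p, Γ_ξ)`.
Since `δ` is `L`-Lipschitz along that same segment, `|δ p - σ| ≤ L a`, and both inclusions reduce
to linear inequalities in `a`, `σ` and `δ p`, which hold for `κ = 1 / (2 (1 + L))` and
`c = κ / (2 (1 + L))`.
-/

open Metric

noncomputable def mkPt {m : ℕ} (x : EuclideanSpace ℝ (Fin m)) (t : ℝ) :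
    WithLp 2 (EuclideanSpace ℝ (Fin m) × ℝ) :=
  (WithLp.equiv 2 (EuclideanSpace ℝ (Fin m) × ℝ)).symm (x, t)

noncomputable def proj {m : ℕ} (p : WithLp 2 (EuclideanSpace ℝ (Fin m) × ℝ)) :
    EuclideanSpace ℝ (Fin m) × ℝ :=
  WithLp.equiv 2 (EuclideanSpace ℝ (Fin m) × ℝ) p

noncomputable def graphOf {m : ℕ} (ξ : EuclideanSpace ℝ (Fin m) → ℝ) :
    Set (WithLp 2 (EuclideanSpace ℝ (Fin m) × ℝ)) :=
  {p | ∃ x, p = mkPt x (ξ x)}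

section GraphOfLipschitz

variable {m : ℕ}

lemma dist_mkPt (x y : EuclideanSpace ℝ (Fin m)) (s t : ℝ) :
    dist (mkPt x s) (mkPt y t) = √(dist x y ^ 2 + dist s t ^ 2) :=
  WithLp.prod_dist_eq_of_L2 _ _

lemma dist_mkPt_self (x : EuclideanSpace ℝ (Fin m)) (s t : ℝ) :
    dist (mkPt x s) (mkPt x t) = |s - t| := by
  rw [dist_mkPt, dist_self, Real.dist_eq]
  simp [Real.sqrt_sq_eq_abs]

lemma mkPt_mem_graphOf (ξ : EuclideanSpace ℝ (Fin m) → ℝ) (x : EuclideanSpace ℝ (Fin m)) :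
    mkPt x (ξ x) ∈ graphOf ξ :=
  ⟨x, rfl⟩

lemma infDist_graphOf_le (ξ : EuclideanSpace ℝ (Fin m) → ℝ) (x : EuclideanSpace ℝ (Fin m))
    (t : ℝ) : infDist (mkPt x t) (graphOf ξ) ≤ |t - ξ x| :=
  dist_mkPt_self x t (ξ x) ▸ infDist_le_dist_of_mem (mkPt_mem_graphOf ξ x)

variable {L : NNReal}

lemma LipschitzWith.abs_sub_le_mul_dist_mkPt {ξ : EuclideanSpace ℝ (Fin m) → ℝ}
    (hξ : LipschitzWith L ξ) (x y : EuclideanSpace ℝ (Fin m)) (t : ℝ) :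
    |t - ξ x| ≤ (1 + L) * dist (mkPt x t) (mkPt y (ξ y)) := by
  have hfst : dist x y ≤ dist (mkPt x t) (mkPt y (ξ y)) :=
    WithLp.dist_fst_le (mkPt x t) (mkPt y (ξ y))
  have hsnd : |t - ξ y| ≤ dist (mkPt x t) (mkPt y (ξ y)) :=
    WithLp.dist_snd_le (mkPt x t) (mkPt y (ξ y))
  have hlip : |ξ y - ξ x| ≤ L * dist x y := by
    simpa only [Real.dist_eq, dist_comm y x] using hξ.dist_le_mul y x
  calc |t - ξ x| ≤ |t - ξ y| + |ξ y - ξ x| := abs_sub_le t (ξ y) (ξ x)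
    _ ≤ dist (mkPt x t) (mkPt y (ξ y)) + L * dist (mkPt x t) (mkPt y (ξ y)) := by
      gcongr
      exact hlip.trans (by gcongr)
    _ = (1 + L) * dist (mkPt x t) (mkPt y (ξ y)) := by ring

lemma LipschitzWith.abs_sub_le_mul_infDist_graphOf {ξ : EuclideanSpace ℝ (Fin m) → ℝ}
    (hξ : LipschitzWith L ξ) (x : EuclideanSpace ℝ (Fin m)) (t : ℝ) :
    |t - ξ x| ≤ (1 + L) * infDist (mkPt x t) (graphOf ξ) := by
  have hL : (0 : ℝ) < 1 + L := by positivity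
  rw [← div_le_iff₀' hL, le_infDist ⟨_, mkPt_mem_graphOf ξ 0⟩]
  rintro _ ⟨y, rfl⟩
  rw [div_le_iff₀' hL]
  exact hξ.abs_sub_le_mul_dist_mkPt x y t

lemma LipschitzWith.abs_sub_mkPt_le
    {δ : WithLp 2 (EuclideanSpace ℝ (Fin m) × ℝ) → ℝ} (hδ : LipschitzWith L δ)
    (x : EuclideanSpace ℝ (Fin m)) (t s : ℝ) :
    |δ (mkPt x t) - δ (mkPt x s)| ≤ L * |t - s| := by
  simpa only [Real.dist_eq, dist_mkPt_self] using hδ.dist_le_mul (mkPt x t) (mkPt x s)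

theorem abs_sub_graph_le_of_infDist_graphOf_lt
    {δ : WithLp 2 (EuclideanSpace ℝ (Fin m) × ℝ) → ℝ} {ξ : EuclideanSpace ℝ (Fin m) → ℝ}
    (hδ : LipschitzWith L δ) (hξ : LipschitzWith L ξ) {c κ : ℝ} (hc₀ : 0 ≤ c)
    (hc : 2 * (1 + L) * c ≤ κ) (hκ : κ * L ≤ 1) {x : EuclideanSpace ℝ (Fin m)} {t : ℝ}
    (h : infDist (mkPt x t) (graphOf ξ) < c * δ (mkPt x t)) :
    |t - ξ x| ≤ κ * δ (mkPt x (ξ x)) := by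
  have hdist := hξ.abs_sub_le_mul_infDist_graphOf x t
  have hδp := (abs_le.mp (hδ.abs_sub_mkPt_le x t (ξ x))).2
  have ha : 0 ≤ |t - ξ x| := abs_nonneg _
  have hδpos : 0 < δ (mkPt x t) :=
    pos_of_mul_pos_right (infDist_nonneg.trans_lt h) hc₀
  have hκ₀ : 0 ≤ κ := le_trans (by positivity) hc
  have hlt : |t - ξ x| < κ / 2 * (δ (mkPt x (ξ x)) + L * |t - ξ x|) :=
    calc |t - ξ x| ≤ (1 + L) * infDist (mkPt x t) (graphOf ξ) := hdist
      _ < (1 + L) * (c * δ (mkPt x t)) := by gcongr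
      _ ≤ κ / 2 * δ (mkPt x t) := by
        rw [← mul_assoc]; gcongr; linarith
      _ ≤ κ / 2 * (δ (mkPt x (ξ x)) + L * |t - ξ x|) := by gcongr; linarith
  nlinarith [mul_le_mul_of_nonneg_right hκ ha]

theorem infDist_graphOf_lt_of_abs_sub_graph_le
    {δ : WithLp 2 (EuclideanSpace ℝ (Fin m) × ℝ) → ℝ} {ξ : EuclideanSpace ℝ (Fin m) → ℝ}
    (hδ : LipschitzWith L δ) {κ : ℝ} (hκ : κ * (1 + L) < 1) {x : EuclideanSpace ℝ (Fin m)}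
    {t : ℝ} (hσ : 0 < δ (mkPt x (ξ x))) (h : |t - ξ x| ≤ κ * δ (mkPt x (ξ x))) :
    infDist (mkPt x t) (graphOf ξ) < δ (mkPt x t) := by
  have hδp := (abs_le.mp (hδ.abs_sub_mkPt_le x t (ξ x))).1
  have hband : |t - ξ x| * (1 + L) < δ (mkPt x (ξ x)) := by
    nlinarith [NNReal.coe_nonneg L]
  linarith [infDist_graphOf_le ξ x t]

end GraphOfLipschitz

theorem stmt2_general {m : ℕ} (L : NNReal) :
    ∃ c κ : ℝ, 0 < c ∧ c < κ ∧ κ < 1 ∧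
      ∀ (δ : WithLp 2 (EuclideanSpace ℝ (Fin m) × ℝ) → ℝ)
        (ξ : EuclideanSpace ℝ (Fin m) → ℝ),
        LipschitzWith L δ → (∀ p, 0 < δ p) → LipschitzWith L ξ →
        ({p | infDist p (graphOf ξ) < c * δ p} ⊆
            {p | |(proj p).2 - ξ (proj p).1| ≤ κ * δ (mkPt (proj p).1 (ξ (proj p).1))}) ∧
        ({p | |(proj p).2 - ξ (proj p).1| ≤ κ * δ (mkPt (proj p).1 (ξ (proj p).1))} ⊆
            {p | infDist p (graphOf ξ) < δ p}) := by
  have hL : (1 : ℝ) ≤ 1 + L := le_add_of_nonneg_right L.coe_nonneg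
  set κ : ℝ := 1 / (2 * (1 + L)) with hκ
  have hκL : κ * (1 + L) = 1 / 2 := by rw [hκ]; field_simp
  refine ⟨κ / (2 * (1 + L)), κ, by positivity, div_lt_self (by positivity) (by linarith),
    by nlinarith, fun δ ξ hδ hδpos hξ => ⟨fun p hp => ?_, fun p hp => ?_⟩⟩
  · refine abs_sub_graph_le_of_infDist_graphOf_lt (x := (proj p).1) (t := (proj p).2) hδ hξ
      (by positivity) ?_ (by nlinarith [L.coe_nonneg]) hp
    rw [mul_div_cancel₀ _ (by positivity)]
  · exact infDist_graphOf_lt_of_abs_sub_graph_le (x := (proj p).1) (t := (proj p).2) hδ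
      (by linarith) (hδpos _) hp

theorem stmt2 {m : ℕ} (L : NNReal) (hL : 0 < L) :
    ∃ c κ : ℝ, 0 < c ∧ c < κ ∧ κ < 1 ∧
      ∀ (δ : WithLp 2 (EuclideanSpace ℝ (Fin m) × ℝ) → ℝ)
        (ξ : EuclideanSpace ℝ (Fin m) → ℝ),
        LipschitzWith L δ → (∀ p, 0 < δ p) → LipschitzWith L ξ →
        ({p | infDist p (graphOf ξ) < c * δ p} ⊆
            {p | |(proj p).2 - ξ (proj p).1| ≤ κ * δ (mkPt (proj p).1 (ξ (proj p).1))}) ∧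
        ({p | |(proj p).2 - ξ (proj p).1| ≤ κ * δ (mkPt (proj p).1 (ξ (proj p).1))} ⊆
            {p | infDist p (graphOf ξ) < δ p}) :=
  stmt2_general L
end

section
/- Define φ : (0,1) × ℝ → ℝ by φ(δ, y) = θ(y/δ)·(δ/(1 + y²)) + (1 − θ(y/δ))·y, where θ : ℝ → [0,1] is a C¹ piecewise-polynomial function with θ(y) = 1 for y ≤ 0 and θ(y) = 0 for y ≥ 1. Then φ is a Lipschitz function on (0,1) × ℝ, i.e. |dφ| is bounded. -/
/-! On the strip `0 ≤ y ≤ δ` the function interpolates between `δ / (1 + y²)` and `y`, which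
differ there by at most `δ`. Differentiating `θ (y / δ)` costs a factor of size `1 / δ` in either
variable, but `θ'` vanishes off that strip, so the product stays bounded by `sup |θ'|`; all other
terms of both partial derivatives are bounded by `1` (in `y` this uses `δ ≤ 1`). The mean value
theorem then gives Lipschitz bounds in each variable separately, and these add up on the product. -/

open Set

theorem LipschitzOnWith.uncurry_prod {α β γ : Type*} [PseudoEMetricSpace α]
    [PseudoEMetricSpace β] [PseudoEMetricSpace γ] {f : α → β → γ} {s : Set α} {t : Set β}
    {Kα Kβ : NNReal} (hα : ∀ b ∈ t, LipschitzOnWith Kα (fun a => f a b) s)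
    (hβ : ∀ a ∈ s, LipschitzOnWith Kβ (f a) t) :
    LipschitzOnWith (Kα + Kβ) (Function.uncurry f) (s ×ˢ t) := by
  rintro ⟨a₁, b₁⟩ ⟨ha₁, hb₁⟩ ⟨a₂, b₂⟩ ⟨ha₂, hb₂⟩
  simp only [Function.uncurry, ENNReal.coe_add, add_mul]
  calc edist (f a₁ b₁) (f a₂ b₂) ≤ edist (f a₁ b₁) (f a₂ b₁) + edist (f a₂ b₁) (f a₂ b₂) :=
        edist_triangle _ _ _
    _ ≤ Kα * edist a₁ a₂ + Kβ * edist b₁ b₂ :=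
        add_le_add (hα b₁ hb₁ ha₁ ha₂) (hβ a₂ ha₂ hb₁ hb₂)
    _ ≤ Kα * edist (a₁, b₁) (a₂, b₂) + Kβ * edist (a₁, b₁) (a₂, b₂) := by
        rw [Prod.edist_eq]; gcongr
        exacts [le_max_left _ _, le_max_right _ _]

theorem Convex.lipschitzOnWith_of_abs_hasDerivWithin_le {f f' : ℝ → ℝ} {s : Set ℝ} {C : ℝ}
    (hs : Convex ℝ s) (hf : ∀ x ∈ s, HasDerivWithinAt f (f' x) s x)
    (bound : ∀ x ∈ s, |f' x| ≤ C) : LipschitzOnWith C.toNNReal f s :=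
  hs.lipschitzOnWith_of_nnnorm_hasDerivWithin_le hf fun x hx => by
    rw [← NNReal.coe_le_coe, coe_nnnorm, Real.coe_toNNReal', Real.norm_eq_abs]
    exact le_max_of_le_left (bound x hx)

theorem deriv_eq_zero_of_notMem_Icc {θ : ℝ → ℝ} {a b c d x : ℝ} (ha : ∀ x ≤ a, θ x = c)
    (hb : ∀ x ≥ b, θ x = d) (hx : x ∉ Icc a b) : deriv θ x = 0 := by
  rcases not_and_or.mp hx with hxa | hxb
  · have : θ =ᶠ[nhds x] fun _ => c :=
      Filter.eventuallyEq_of_mem (Iio_mem_nhds (not_le.mp hxa)) fun y hy => ha y (le_of_lt hy)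
    rw [this.deriv_eq, deriv_const]
  · have : θ =ᶠ[nhds x] fun _ => d :=
      Filter.eventuallyEq_of_mem (Ioi_mem_nhds (not_le.mp hxb)) fun y hy => hb y (le_of_lt hy)
    rw [this.deriv_eq, deriv_const]

theorem abs_div_one_add_sq_sub_le {δ y : ℝ} (hy : 0 ≤ y) (hyδ : y ≤ δ) :
    |δ / (1 + y ^ 2) - y| ≤ δ := by
  have h0 : 0 ≤ δ / (1 + y ^ 2) := div_nonneg (hy.trans hyδ) (by positivity)
  have hδ : δ / (1 + y ^ 2) ≤ δ := div_le_self (hy.trans hyδ) (by nlinarith)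
  rw [abs_le]; constructor <;> linarith

theorem abs_two_mul_div_one_add_sq_sq_le_one (y : ℝ) : |2 * y / (1 + y ^ 2) ^ 2| ≤ 1 := by
  rw [abs_div, abs_of_pos (by positivity : (0 : ℝ) < (1 + y ^ 2) ^ 2), div_le_one (by positivity),
    abs_mul, abs_two]
  nlinarith [sq_abs y, sq_nonneg (|y| - 1), sq_nonneg y]

noncomputable def cutoffBlend (θ : ℝ → ℝ) (δ y : ℝ) : ℝ :=
  θ (y / δ) * (δ / (1 + y ^ 2)) + (1 - θ (y / δ)) * y

section cutoffBlend

variable {θ : ℝ → ℝ} {B δ y : ℝ}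

theorem hasDerivAt_cutoffBlend_right (hθ : Differentiable ℝ θ) (δ y : ℝ) :
    HasDerivAt (cutoffBlend θ δ)
      (deriv θ (y / δ) * δ⁻¹ * (δ / (1 + y ^ 2) - y)
        + (θ (y / δ) * (-(δ * (2 * y / (1 + y ^ 2) ^ 2))) + (1 - θ (y / δ)))) y := by
  have hθy : HasDerivAt (fun z => θ (z / δ)) (deriv θ (y / δ) * (1 / δ)) y :=
    (hθ _).hasDerivAt.comp y ((hasDerivAt_id y).div_const δ)
  have hs : HasDerivAt (fun z => 1 + z ^ 2) (2 * y) y := by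
    simpa using (hasDerivAt_pow 2 y).const_add 1
  have hq : HasDerivAt (fun z => δ / (1 + z ^ 2))
      ((0 * (1 + y ^ 2) - δ * (2 * y)) / (1 + y ^ 2) ^ 2) y :=
    (hasDerivAt_const y δ).div hs (by positivity)
  have h : HasDerivAt (cutoffBlend θ δ) (deriv θ (y / δ) * (1 / δ) * (δ / (1 + y ^ 2))
      + θ (y / δ) * ((0 * (1 + y ^ 2) - δ * (2 * y)) / (1 + y ^ 2) ^ 2)
      + ((0 - deriv θ (y / δ) * (1 / δ)) * y + (1 - θ (y / δ)) * 1)) y :=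
    (hθy.mul hq).add (((hasDerivAt_const y 1).sub hθy).mul (hasDerivAt_id y))
  exact h.congr_deriv (by ring)

theorem hasDerivAt_cutoffBlend_left (hθ : Differentiable ℝ θ) (hδ : δ ≠ 0) (y : ℝ) :
    HasDerivAt (fun δ => cutoffBlend θ δ y)
      (deriv θ (y / δ) * (-y / δ ^ 2) * (δ / (1 + y ^ 2) - y) + θ (y / δ) / (1 + y ^ 2)) δ := by
  have hθδ : HasDerivAt (fun d => θ (y / d)) (deriv θ (y / δ) * ((0 * δ - y * 1) / δ ^ 2)) δ :=
    (hθ _).hasDerivAt.comp δ ((hasDerivAt_const δ y).div (hasDerivAt_id δ) hδ)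
  have h : HasDerivAt (fun δ => cutoffBlend θ δ y)
      (deriv θ (y / δ) * ((0 * δ - y * 1) / δ ^ 2) * (δ / (1 + y ^ 2))
        + θ (y / δ) * (1 / (1 + y ^ 2))
        + (0 - deriv θ (y / δ) * ((0 * δ - y * 1) / δ ^ 2)) * y) δ :=
    (hθδ.mul ((hasDerivAt_id δ).div_const (1 + y ^ 2))).add
      (((hasDerivAt_const δ 1).sub hθδ).mul_const y)
  exact h.congr_deriv (by ring)

theorem abs_deriv_comp_div_mul_le (hsupp : ∀ x ∉ Icc (0 : ℝ) 1, deriv θ x = 0)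
    (hB : ∀ x, |deriv θ x| ≤ B) (hδ : 0 < δ) {c : ℝ} (hc : y ∈ Icc 0 δ → |c| ≤ δ⁻¹) :
    |deriv θ (y / δ) * c * (δ / (1 + y ^ 2) - y)| ≤ B := by
  have hB0 : 0 ≤ B := (abs_nonneg _).trans (hB 0)
  by_cases hy : y ∈ Icc 0 δ
  · calc |deriv θ (y / δ) * c * (δ / (1 + y ^ 2) - y)|
        = |deriv θ (y / δ)| * |c| * |δ / (1 + y ^ 2) - y| := by rw [abs_mul, abs_mul]
      _ ≤ B * δ⁻¹ * δ := by
        gcongr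
        exacts [hB _, hc hy, abs_div_one_add_sq_sub_le hy.1 hy.2]
      _ = B := by field_simp
  · have hyδ : y / δ ∉ Icc 0 1 := fun h =>
      hy ⟨by simpa using (le_div_iff₀ hδ).mp h.1, (div_le_one hδ).mp h.2⟩
    rw [hsupp _ hyδ, zero_mul, zero_mul, abs_zero]
    exact hB0

theorem abs_deriv_cutoffBlend_right_le (hsupp : ∀ x ∉ Icc (0 : ℝ) 1, deriv θ x = 0)
    (hB : ∀ x, |deriv θ x| ≤ B) (hrange : ∀ x, θ x ∈ Icc (0 : ℝ) 1) (hδ : δ ∈ Ioc 0 1) :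
    |deriv θ (y / δ) * δ⁻¹ * (δ / (1 + y ^ 2) - y)
      + (θ (y / δ) * (-(δ * (2 * y / (1 + y ^ 2) ^ 2))) + (1 - θ (y / δ)))| ≤ B + 1 := by
  have htrans := abs_deriv_comp_div_mul_le (y := y) hsupp hB hδ.1
    fun _ => (abs_of_pos (inv_pos.mpr hδ.1)).le
  have hq : |δ * (2 * y / (1 + y ^ 2) ^ 2)| ≤ 1 := by
    rw [abs_mul, abs_of_pos hδ.1]
    exact mul_le_one₀ hδ.2 (abs_nonneg _) (abs_two_mul_div_one_add_sq_sq_le_one y)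
  obtain ⟨hθ0, hθ1⟩ := hrange (y / δ)
  -- a convex combination of two numbers in `[-1, 1]`
  have hconv : |θ (y / δ) * (-(δ * (2 * y / (1 + y ^ 2) ^ 2))) + (1 - θ (y / δ))| ≤ 1 := by
    rw [abs_le] at hq ⊢
    constructor <;> nlinarith
  exact (abs_add_le _ _).trans (add_le_add htrans hconv)

theorem abs_deriv_cutoffBlend_left_le (hsupp : ∀ x ∉ Icc (0 : ℝ) 1, deriv θ x = 0)
    (hB : ∀ x, |deriv θ x| ≤ B) (hrange : ∀ x, θ x ∈ Icc (0 : ℝ) 1) (hδ : 0 < δ) :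
    |deriv θ (y / δ) * (-y / δ ^ 2) * (δ / (1 + y ^ 2) - y) + θ (y / δ) / (1 + y ^ 2)|
      ≤ B + 1 := by
  have htrans := abs_deriv_comp_div_mul_le (c := -y / δ ^ 2) hsupp hB hδ fun hy => by
    rw [abs_div, abs_neg, abs_of_nonneg hy.1, abs_of_pos (by positivity)]
    calc y / δ ^ 2 = y / δ * δ⁻¹ := by ring
      _ ≤ 1 * δ⁻¹ := by gcongr; exact (div_le_one hδ).mpr hy.2
      _ = δ⁻¹ := one_mul _
  have hθ : |θ (y / δ) / (1 + y ^ 2)| ≤ 1 := by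
    obtain ⟨hθ0, hθ1⟩ := hrange (y / δ)
    rw [abs_div, abs_of_nonneg hθ0, abs_of_pos (by positivity), div_le_one (by positivity)]
    nlinarith [sq_nonneg y]
  exact (abs_add_le _ _).trans (add_le_add htrans hθ)

theorem lipschitzWith_cutoffBlend_right (hθ : Differentiable ℝ θ)
    (hsupp : ∀ x ∉ Icc (0 : ℝ) 1, deriv θ x = 0) (hB : ∀ x, |deriv θ x| ≤ B)
    (hrange : ∀ x, θ x ∈ Icc (0 : ℝ) 1) (hδ : δ ∈ Ioc 0 1) :
    LipschitzWith (B + 1).toNNReal (cutoffBlend θ δ) :=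
  lipschitzOnWith_univ.mp <| convex_univ.lipschitzOnWith_of_abs_hasDerivWithin_le
    (fun y _ => (hasDerivAt_cutoffBlend_right hθ δ y).hasDerivWithinAt)
    fun _ _ => abs_deriv_cutoffBlend_right_le hsupp hB hrange hδ

theorem lipschitzOnWith_cutoffBlend_left (hθ : Differentiable ℝ θ)
    (hsupp : ∀ x ∉ Icc (0 : ℝ) 1, deriv θ x = 0) (hB : ∀ x, |deriv θ x| ≤ B)
    (hrange : ∀ x, θ x ∈ Icc (0 : ℝ) 1) (y : ℝ) :
    LipschitzOnWith (B + 1).toNNReal (fun δ => cutoffBlend θ δ y) (Ioi 0) :=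
  (convex_Ioi 0).lipschitzOnWith_of_abs_hasDerivWithin_le
    (fun _ hδ => (hasDerivAt_cutoffBlend_left hθ (ne_of_gt hδ) y).hasDerivWithinAt)
    fun _ hδ => abs_deriv_cutoffBlend_left_le hsupp hB hrange hδ

end cutoffBlend

theorem stmt8 (θ : ℝ → ℝ) (hθ : ContDiff ℝ 1 θ)
    (hrange : ∀ x, θ x ∈ Set.Icc (0 : ℝ) 1)
    (h1 : ∀ x ≤ (0 : ℝ), θ x = 1) (h0 : ∀ x ≥ (1 : ℝ), θ x = 0)
    (hB : ∃ B : ℝ, ∀ x, |deriv θ x| ≤ B) :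
    ∃ K : NNReal, LipschitzOnWith K
      (fun p : ℝ × ℝ => θ (p.2 / p.1) * (p.1 / (1 + p.2 ^ 2)) + (1 - θ (p.2 / p.1)) * p.2)
      (Set.Ioo (0 : ℝ) 1 ×ˢ Set.univ) := by
  obtain ⟨B, hB⟩ := hB
  have hθd : Differentiable ℝ θ := hθ.differentiable one_ne_zero
  have hsupp : ∀ x ∉ Icc (0 : ℝ) 1, deriv θ x = 0 := fun _ hx =>
    deriv_eq_zero_of_notMem_Icc h1 h0 hx
  exact ⟨_, LipschitzOnWith.uncurry_prod (f := cutoffBlend θ)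
    (fun y _ => (lipschitzOnWith_cutoffBlend_left hθd hsupp hB hrange y).mono Ioo_subset_Ioi_self)
    fun _ hδ => (lipschitzWith_cutoffBlend_right hθd hsupp hB hrange
      (Ioo_subset_Ioc_self hδ)).lipschitzOnWith⟩
end
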